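/- Let 0 < λ ≤ Λ, let 1 ≤ p ≤ n be an integer, let b ≥ 0, c > 0, δ > 0, and let Ω ⊆ B_δ = {|x| < δ} be a bounded domain of ℝⁿ. If u ∈ USC(Ω) is a viscosity subsolution of P⁺_{λ,Λ|p}(D²u) + b|Du| − c·u = f(x) in Ω with f : Ω → ℝ continuous, then for every ε > 0, sup_Ω u ≤ limsup_{y→∂Ω} u⁺(y) + C·‖f⁻‖_∞ with C = (δ² + (2/c)(λp − bδ)⁻ + ε)/(2(λp − bδ)⁺ + cε), where t⁺ = max(t,0) and t⁻ = max(−t,0). -/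

import Mathlib

open MeasureTheory Metric Filter
open scoped ENNReal

noncomputable section

/-- Matrix (in the standard basis) of the orthogonal projection of `ℝⁿ` onto a subspace `W`. -/
noncomputable def projMatrix {n : ℕ} (W : Submodule ℝ (EuclideanSpace ℝ (Fin n))) :
    Matrix (Fin n) (Fin n) ℝ :=
  LinearMap.toMatrix (EuclideanSpace.basisFun (Fin n) ℝ).toBasis
    (EuclideanSpace.basisFun (Fin n) ℝ).toBasis
    (W.subtype ∘ₗ W.orthogonalProjectionOnto.toLinearMap)

/-- `X_W = P_W X P_W`, the compression of `X` to the subspace `W`. -/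
noncomputable def restrictW {n : ℕ} (W : Submodule ℝ (EuclideanSpace ℝ (Fin n)))
    (X : Matrix (Fin n) (Fin n) ℝ) : Matrix (Fin n) (Fin n) ℝ :=
  projMatrix W * X * projMatrix W

/-- `Tr(A⁺)`, i.e. the sum of the positive parts of the eigenvalues of a symmetric matrix `A`,
where `A = A⁺ - A⁻` is the unique decomposition with `A⁺, A⁻` positive semidefinite and
`A⁺ A⁻ = 0`. -/
noncomputable def posTrace {n : ℕ} (A : Matrix (Fin n) (Fin n) ℝ) : ℝ :=
  if h : A.IsHermitian then ∑ i, max (h.eigenvalues i) 0 else 0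

/-- `Tr(A⁻)`, the sum of the negative parts of the eigenvalues of a symmetric matrix `A`. -/
noncomputable def negTrace {n : ℕ} (A : Matrix (Fin n) (Fin n) ℝ) : ℝ :=
  if h : A.IsHermitian then ∑ i, max (-h.eigenvalues i) 0 else 0

/-- The restricted Pucci maximal operator `P⁺_{λ,Λ|W}(X) = Λ·Tr(X_W⁺) − λ·Tr(X_W⁻)`. -/
noncomputable def pucciSupW {n : ℕ} (lam Lam : ℝ) (W : Submodule ℝ (EuclideanSpace ℝ (Fin n)))
    (X : Matrix (Fin n) (Fin n) ℝ) : ℝ :=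
  Lam * posTrace (restrictW W X) - lam * negTrace (restrictW W X)

/-- The restricted Pucci minimal operator `P⁻_{λ,Λ|W}(X) = λ·Tr(X_W⁺) − Λ·Tr(X_W⁻)`. -/
noncomputable def pucciInfW {n : ℕ} (lam Lam : ℝ) (W : Submodule ℝ (EuclideanSpace ℝ (Fin n)))
    (X : Matrix (Fin n) (Fin n) ℝ) : ℝ :=
  lam * posTrace (restrictW W X) - Lam * negTrace (restrictW W X)

/-- The eigenvalues of a symmetric matrix arranged in increasing order, `0`-based:
`sortedEig X 0 = e_1(X) ≤ … ≤ sortedEig X (n-1) = e_n(X)`. -/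
noncomputable def sortedEig {n : ℕ} (X : Matrix (Fin n) (Fin n) ℝ) : Fin n → ℝ :=
  if h : X.IsHermitian then h.eigenvalues ∘ (Tuple.sort h.eigenvalues) else 0

/-- The degenerate Pucci maximal operator of order `p`:
`P⁺_{λ,Λ|p}(X) = Σ_{i=n−p+1}^n (Λ·e_i(X)⁺ − λ·e_i(X)⁻)` (sum over the `p` largest
eigenvalues). -/
noncomputable def pucciSupP {n : ℕ} (lam Lam : ℝ) (p : ℕ)
    (X : Matrix (Fin n) (Fin n) ℝ) : ℝ :=
  ∑ i ∈ Finset.univ.filter (fun i : Fin n => n - p ≤ (i : ℕ)),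
    (Lam * max (sortedEig X i) 0 - lam * max (-(sortedEig X i)) 0)

/-- The degenerate Pucci minimal operator of order `p`:
`P⁻_{λ,Λ|p}(X) = Σ_{i=1}^p (λ·e_i(X)⁺ − Λ·e_i(X)⁻)` (sum over the `p` smallest
eigenvalues). -/
noncomputable def pucciInfP {n : ℕ} (lam Lam : ℝ) (p : ℕ)
    (X : Matrix (Fin n) (Fin n) ℝ) : ℝ :=
  ∑ i ∈ Finset.univ.filter (fun i : Fin n => (i : ℕ) < p),
    (lam * max (sortedEig X i) 0 - Lam * max (-(sortedEig X i)) 0)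

/-- The Hessian matrix `D²φ(x)` of a real valued function on `ℝⁿ`. -/
noncomputable def hessianMatrix {n : ℕ} (φ : EuclideanSpace ℝ (Fin n) → ℝ)
    (x : EuclideanSpace ℝ (Fin n)) : Matrix (Fin n) (Fin n) ℝ :=
  fun i j => iteratedFDeriv ℝ 2 φ x ![EuclideanSpace.single i 1, EuclideanSpace.single j 1]

/-- `u` is a viscosity subsolution of `G(u, Du, D²u) = f(x)` in `Ω`. -/
def IsViscositySubsolution {n : ℕ} (Ω : Set (EuclideanSpace ℝ (Fin n)))
    (G : ℝ → EuclideanSpace ℝ (Fin n) → Matrix (Fin n) (Fin n) ℝ → ℝ)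
    (u f : EuclideanSpace ℝ (Fin n) → ℝ) : Prop :=
  ∀ x₀ ∈ Ω, ∀ φ : EuclideanSpace ℝ (Fin n) → ℝ, ContDiff ℝ 2 φ →
    IsLocalMaxOn (fun x => u x - φ x) Ω x₀ →
    f x₀ ≤ G (u x₀) (gradient φ x₀) (hessianMatrix φ x₀)

/-- `v` is a viscosity supersolution of `G(v, Dv, D²v) = f(x)` in `Ω`. -/
def IsViscositySupersolution {n : ℕ} (Ω : Set (EuclideanSpace ℝ (Fin n)))
    (G : ℝ → EuclideanSpace ℝ (Fin n) → Matrix (Fin n) (Fin n) ℝ → ℝ)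
    (v f : EuclideanSpace ℝ (Fin n) → ℝ) : Prop :=
  ∀ x₀ ∈ Ω, ∀ φ : EuclideanSpace ℝ (Fin n) → ℝ, ContDiff ℝ 2 φ →
    IsLocalMinOn (fun x => v x - φ x) Ω x₀ →
    G (v x₀) (gradient φ x₀) (hessianMatrix φ x₀) ≤ f x₀

-- The `α`-Riesz kernel (for sets contained in `B_d`), with value `∞` at the origin:
-- `Φ_α(x) = |x|^{−α}` for `α > 0` and `Φ_0(x) = log(2d/|x|)`.
open Classical in
noncomputable def rieszKernel {n : ℕ} (α d : ℝ) (x : EuclideanSpace ℝ (Fin n)) : ℝ≥0∞ :=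
  if x = 0 then ⊤
  else ENNReal.ofReal (if α = 0 then Real.log (2 * d / ‖x‖) else ‖x‖ ^ (-α))

/-- The real valued `α`-Riesz kernel (for sets contained in `B_d`):
`Φ_α(x) = |x|^{−α}` for `α > 0` and `Φ_0(x) = log(2d/|x|)`. -/
noncomputable def rieszKernelR {n : ℕ} (α d : ℝ) (x : EuclideanSpace ℝ (Fin n)) : ℝ :=
  if α = 0 then Real.log (2 * d / ‖x‖) else ‖x‖ ^ (-α)

/-- A set `E ⊆ ℝⁿ` has zero `α`-Riesz capacity: every Borel probability measure supported
on a compact subset of `E` has infinite `α`-energy. -/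
def HasZeroRieszCapacity {n : ℕ} (α : ℝ) (E : Set (EuclideanSpace ℝ (Fin n))) : Prop :=
  ∀ K ⊆ E, IsCompact K → ∀ d > 0, K ⊆ ball (0 : EuclideanSpace ℝ (Fin n)) d →
    ∀ μ : Measure (EuclideanSpace ℝ (Fin n)), IsProbabilityMeasure μ → μ Kᶜ = 0 →
      ∫⁻ x, ∫⁻ y, rieszKernel α d (x - y) ∂μ ∂μ = ⊤

open Topology

/-!
For `k ≥ 0` the function `v = u + k/2 |x|²` is upper semicontinuous and, near `∂Ω`, at most
`M + k δ²/2`. Either that bound holds on all of `Ω`, or `v` attains its maximum at some `x₀ ∈ Ω`.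
In the latter case `-k/2 |x|²` touches `u` from above at `x₀`; its Hessian `-k I` has
`P⁺ = -λ p k` and its gradient has norm `k |x₀| < k δ`, so the equation gives
`c u(x₀) ≤ K - k (λ p - b δ)`. Hence `u ≤ max(M, (K - k (λ p - b δ))/c) + k δ²/2`, and
`k = 2K / (2 (λ p - b δ)⁺ + c ε)` turns this into the stated bound, since `M ≥ 0` by the
boundary condition at any boundary point.
-/

section Quadratic

variable {F : Type*} [NormedAddCommGroup F] [InnerProductSpace ℝ F]

theorem hasFDerivAt_half_mul_norm_sq (t : ℝ) (x : F) :
    HasFDerivAt (fun y : F => t / 2 * ‖y‖ ^ 2) (t • innerSL ℝ x) x :=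
  ((hasStrictFDerivAt_norm_sq x).hasFDerivAt.const_mul (t / 2)).congr_fderiv <| by
    ext y; simp; ring

theorem fderiv_fderiv_half_mul_norm_sq (t : ℝ) (x : F) :
    fderiv ℝ (fderiv ℝ fun y : F => t / 2 * ‖y‖ ^ 2) x = t • innerSL ℝ := by
  have : fderiv ℝ (fun y : F => t / 2 * ‖y‖ ^ 2) = t • innerSL ℝ :=
    funext fun z => (hasFDerivAt_half_mul_norm_sq t z).fderiv
  rw [this]
  exact ContinuousLinearMap.fderiv _

theorem gradient_half_mul_norm_sq [CompleteSpace F] (t : ℝ) (x : F) :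
    gradient (fun y : F => t / 2 * ‖y‖ ^ 2) x = t • x := by
  refine (hasGradientAt_iff_hasFDerivAt.2 <|
    (hasFDerivAt_half_mul_norm_sq t x).congr_fderiv ?_).gradient
  ext y
  simp

end Quadratic

theorem hessianMatrix_half_mul_norm_sq {n : ℕ} (t : ℝ) (x : EuclideanSpace ℝ (Fin n)) :
    hessianMatrix (fun y => t / 2 * ‖y‖ ^ 2) x = t • 1 := by
  ext i j
  simp only [hessianMatrix, iteratedFDeriv_two_apply, Matrix.cons_val_zero, Matrix.cons_val_one]
  rw [fderiv_fderiv_half_mul_norm_sq, smul_apply, smul_apply, innerSL_apply_apply]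
  simp [EuclideanSpace.inner_single_left, Matrix.one_apply]

theorem sortedEig_smul_one {n : ℕ} (t : ℝ) (i : Fin n) :
    sortedEig (t • (1 : Matrix (Fin n) (Fin n) ℝ)) i = t := by
  have hherm : (t • 1 : Matrix (Fin n) (Fin n) ℝ).IsHermitian := by simp [Matrix.IsHermitian]
  have : Nonempty (Fin n) := ⟨i⟩
  have hspec : spectrum ℝ (t • 1 : Matrix (Fin n) (Fin n) ℝ) = {t} := by
    rw [← Algebra.algebraMap_eq_smul_one, spectrum.scalar_eq]
  simpa [sortedEig, hherm, hspec] using hherm.eigenvalues_mem_spectrum_real (Tuple.sort _ i)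

theorem Fin.card_filter_sub_le_val {n p : ℕ} (h : p ≤ n) :
    (Finset.univ.filter fun i : Fin n => n - p ≤ (i : ℕ)).card = p := by
  have := Finset.card_filter_add_card_filter_not (s := Finset.univ)
    (fun i : Fin n => (i : ℕ) < n - p)
  simp only [not_lt, Finset.card_univ, Fintype.card_fin, Fin.card_filter_val_lt] at this
  omega

theorem pucciSupP_smul_one {n : ℕ} (lam Lam : ℝ) {p : ℕ} (hpn : p ≤ n) (t : ℝ) :
    pucciSupP lam Lam p (t • (1 : Matrix (Fin n) (Fin n) ℝ)) =
      p * (Lam * max t 0 - lam * max (-t) 0) := by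
  simp only [pucciSupP, sortedEig_smul_one, Finset.sum_const, Fin.card_filter_sub_le_val hpn,
    nsmul_eq_mul]

theorem IsOpen.exists_isMaxOn_or_forall_le {X : Type*} [TopologicalSpace X] {Ω : Set X}
    (hΩ : IsOpen Ω) (hcpt : IsCompact (closure Ω)) {v : X → ℝ} (hv : UpperSemicontinuousOn v Ω)
    {M : ℝ} (hM : ∀ z ∈ frontier Ω, ∀ ε > 0, ∀ᶠ y in 𝓝[Ω] z, v y ≤ M + ε) :
    (∃ x₀ ∈ Ω, IsMaxOn v Ω x₀) ∨ ∀ y ∈ Ω, v y ≤ M := by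
  classical
  rcases Ω.eq_empty_or_nonempty with rfl | hne
  · simp
  -- extended by `M` off `Ω`, `v` becomes upper semicontinuous on the compact set `closure Ω`
  obtain ⟨w, hw_in, hw_out⟩ : ∃ w : X → ℝ, (∀ y ∈ Ω, w y = v y) ∧ ∀ y ∉ Ω, w y = M :=
    ⟨Ω.piecewise v fun _ => M, fun _ => Set.piecewise_eq_of_mem _ _ _,
      fun _ => Set.piecewise_eq_of_notMem _ _ _⟩
  have hw : UpperSemicontinuousOn w (closure Ω) := by
    intro z hz t ht
    refine Eventually.filter_mono nhdsWithin_le_nhds ?_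
    by_cases hzΩ : z ∈ Ω
    · rw [hw_in z hzΩ] at ht
      have := hv z hzΩ t ht
      rw [hΩ.nhdsWithin_eq hzΩ] at this
      filter_upwards [this, hΩ.mem_nhds hzΩ] with y hy hyΩ
      rwa [hw_in y hyΩ]
    · rw [hw_out z hzΩ] at ht
      have hzfr : z ∈ frontier Ω := by rw [hΩ.frontier_eq]; exact ⟨hz, hzΩ⟩
      filter_upwards [eventually_nhdsWithin_iff.1 (hM z hzfr ((t - M) / 2) (by linarith))]
        with y hy
      by_cases hyΩ : y ∈ Ω
      · rw [hw_in y hyΩ]; linarith [hy hyΩ]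
      · rwa [hw_out y hyΩ]
  obtain ⟨x₀, -, hmax⟩ := hw.exists_isMaxOn hne.closure hcpt
  have hvw : ∀ y ∈ Ω, v y ≤ w x₀ := fun y hy => hw_in y hy ▸ hmax (subset_closure hy)
  by_cases hx₀ : x₀ ∈ Ω
  · exact .inl ⟨x₀, hx₀, fun y hy => by simpa [hw_in x₀ hx₀] using hvw y hy⟩
  · exact .inr fun y hy => hw_out x₀ hx₀ ▸ hvw y hy

section Subsolution

variable {n p : ℕ} {lam Lam b c : ℝ} {Ω : Set (EuclideanSpace ℝ (Fin n))}
  {u f : EuclideanSpace ℝ (Fin n) → ℝ}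

theorem IsViscositySubsolution.mul_le_of_isMaxOn_add_half_mul_norm_sq
    (hsub : IsViscositySubsolution Ω (fun r ξ X => pucciSupP lam Lam p X + b * ‖ξ‖ - c * r) u f)
    (hpn : p ≤ n) {k : ℝ} (hk : 0 ≤ k) {x₀ : EuclideanSpace ℝ (Fin n)} (hx₀ : x₀ ∈ Ω)
    (hmax : IsMaxOn (fun y => u y + k / 2 * ‖y‖ ^ 2) Ω x₀) :
    c * u x₀ ≤ -f x₀ - p * lam * k + b * k * ‖x₀‖ := by
  have hloc : IsLocalMaxOn (fun y => u y - -k / 2 * ‖y‖ ^ 2) Ω x₀ := by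
    simpa [neg_div, sub_neg_eq_add] using hmax.localize
  have := hsub x₀ hx₀ _ (contDiff_const.mul (contDiff_norm_sq ℝ)) hloc
  dsimp only at this
  rw [hessianMatrix_half_mul_norm_sq, pucciSupP_smul_one lam Lam hpn, gradient_half_mul_norm_sq,
    norm_smul, Real.norm_eq_abs, abs_neg, abs_of_nonneg hk, max_eq_right (neg_nonpos.2 hk),
    neg_neg, max_eq_left hk] at this
  linarith

theorem IsViscositySubsolution.le_max_add_of_subset_ball
    (hsub : IsViscositySubsolution Ω (fun r ξ X => pucciSupP lam Lam p X + b * ‖ξ‖ - c * r) u f)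
    (hpn : p ≤ n) (hb : 0 ≤ b) (hc : 0 < c) {δ : ℝ} (hΩo : IsOpen Ω) (hΩsub : Ω ⊆ ball 0 δ)
    (hu : UpperSemicontinuousOn u Ω) {K : ℝ} (hfK : ∀ x ∈ Ω, -f x ≤ K) {M : ℝ}
    (hM : ∀ z ∈ frontier Ω, ∀ ε > 0, ∀ᶠ y in 𝓝[Ω] z, u y ≤ M + ε) {k : ℝ} (hk : 0 ≤ k) :
    ∀ x ∈ Ω, u x ≤ max M ((K - k * (lam * p - b * δ)) / c) + k / 2 * δ ^ 2 := by
  intro x hx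
  have hnorm : ∀ y ∈ Ω, ‖y‖ < δ := fun y hy => mem_ball_zero_iff.1 (hΩsub hy)
  have hquad : ∀ y ∈ Ω, k / 2 * ‖y‖ ^ 2 ≤ k / 2 * δ ^ 2 := fun y hy => by
    gcongr; exact (hnorm y hy).le
  have hu_le : u x ≤ u x + k / 2 * ‖x‖ ^ 2 := le_add_of_nonneg_right (by positivity)
  rcases hΩo.exists_isMaxOn_or_forall_le (isBounded_ball.subset hΩsub).isCompact_closure
    (hu.add (by fun_prop : Continuous fun y => k / 2 * ‖y‖ ^ 2).continuousOn.upperSemicontinuousOn)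
    (M := M + k / 2 * δ ^ 2) (fun z hz ε hε => by
      filter_upwards [hM z hz ε hε, self_mem_nhdsWithin] with y hy hyΩ
      linarith [hquad y hyΩ]) with ⟨x₀, hx₀, hmax⟩ | hle
  · have hcu := hsub.mul_le_of_isMaxOn_add_half_mul_norm_sq hpn hk hx₀ hmax
    have hbk : b * k * ‖x₀‖ ≤ b * k * δ := by gcongr; exact (hnorm x₀ hx₀).le
    have hux₀ : u x₀ ≤ (K - k * (lam * p - b * δ)) / c := by
      rw [le_div_iff₀ hc]; linarith [hfK x₀ hx₀]
    calc u x ≤ u x₀ + k / 2 * ‖x₀‖ ^ 2 := hu_le.trans (hmax hx)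
      _ ≤ _ := add_le_add (hux₀.trans (le_max_right _ _)) (hquad x₀ hx₀)
  · linarith [hle x hx, le_max_left M ((K - k * (lam * p - b * δ)) / c)]

end Subsolution

theorem maximum_principle_coercive_general (n : ℕ) (lam Lam : ℝ)
    (p : ℕ) (hp1 : 1 ≤ p) (hpn : p ≤ n)
    (b c δ : ℝ) (hb : 0 ≤ b) (hc : 0 < c)
    (Ω : Set (EuclideanSpace ℝ (Fin n))) (hΩo : IsOpen Ω)
    (hΩsub : Ω ⊆ ball (0 : EuclideanSpace ℝ (Fin n)) δ)
    (u f : EuclideanSpace ℝ (Fin n) → ℝ) (hu : UpperSemicontinuousOn u Ω)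
    (hsub : IsViscositySubsolution Ω
      (fun r ξ X => pucciSupP lam Lam p X + b * ‖ξ‖ - c * r) u f)
    (M K : ℝ) (hfK : ∀ x ∈ Ω, max (-f x) 0 ≤ K)
    (hM : ∀ x ∈ frontier Ω, ∀ ε > 0, ∀ᶠ y in nhdsWithin x Ω, max (u y) 0 ≤ M + ε) :
    ∀ ε > 0, ∀ x ∈ Ω, u x ≤ M +
      (δ ^ 2 + 2 / c * max (-(lam * p - b * δ)) 0 + ε) /
        (2 * max (lam * p - b * δ) 0 + c * ε) * K := by
  intro ε hε x hx
  have hK : 0 ≤ K := (le_max_right _ _).trans (hfK x hx)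
  have : Nonempty (Fin n) := ⟨⟨0, by omega⟩⟩
  obtain ⟨z, hz⟩ : (frontier Ω).Nonempty := nonempty_frontier_iff.2 ⟨⟨x, hx⟩, fun h =>
    NormedSpace.unbounded_univ ℝ _ (h ▸ isBounded_ball.subset hΩsub)⟩
  have : (𝓝[Ω] z).NeBot := mem_closure_iff_nhdsWithin_neBot.1 (frontier_subset_closure hz)
  have hM0 : 0 ≤ M := le_of_forall_pos_le_add fun η hη =>
    let ⟨_, hy⟩ := (hM z hz η hη).exists
    (le_max_right _ _).trans hy
  set q := lam * p - b * δ
  set D := 2 * max q 0 + c * ε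
  have hD : 0 < D := by positivity
  have hqD : 2 * q ≤ D := by linarith [le_max_left q 0, mul_pos hc hε]
  have hbound := hsub.le_max_add_of_subset_ball hpn hb hc hΩo hΩsub hu
    (fun y hy => (le_max_left _ _).trans (hfK y hy))
    (fun z hz η hη => (hM z hz η hη).mono fun y hy => (le_max_left _ _).trans hy)
    (k := 2 * K / D) (by positivity) x hx
  have hrest : 0 ≤ (K - 2 * K / D * q) / c := by
    apply div_nonneg _ hc.le
    rw [← mul_div_right_comm, sub_nonneg, div_le_iff₀ hD]
    linarith [mul_le_mul_of_nonneg_left hqD hK]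
  calc u x ≤ M + (K - 2 * K / D * q) / c + 2 * K / D / 2 * δ ^ 2 := by
        linarith [max_le_add_of_nonneg hM0 hrest]
    _ = M + (δ ^ 2 + 2 / c * max (-q) 0 + ε) / D * K := by
        field_simp
        linear_combination (2 * K) * max_zero_sub_eq_self q

/-- maximum principle for the degenerate maximal equation with a positive
coercive zero order term. -/
theorem maximum_principle_coercive (n : ℕ) (lam Lam : ℝ) (hlam : 0 < lam)
    (hLam : lam ≤ Lam) (p : ℕ) (hp1 : 1 ≤ p) (hpn : p ≤ n)
    (b c δ : ℝ) (hb : 0 ≤ b) (hc : 0 < c) (hδ : 0 < δ)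
    (Ω : Set (EuclideanSpace ℝ (Fin n))) (hΩo : IsOpen Ω) (hΩconn : IsConnected Ω)
    (hΩsub : Ω ⊆ ball (0 : EuclideanSpace ℝ (Fin n)) δ)
    (u f : EuclideanSpace ℝ (Fin n) → ℝ) (hu : UpperSemicontinuousOn u Ω) (hf : ContinuousOn f Ω)
    (hsub : IsViscositySubsolution Ω
      (fun r ξ X => pucciSupP lam Lam p X + b * ‖ξ‖ - c * r) u f)
    (M K : ℝ) (hK0 : 0 ≤ K) (hfK : ∀ x ∈ Ω, max (-f x) 0 ≤ K)
    (hM : ∀ x ∈ frontier Ω, ∀ ε > 0, ∀ᶠ y in nhdsWithin x Ω, max (u y) 0 ≤ M + ε) :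
    ∀ ε > 0, ∀ x ∈ Ω, u x ≤ M +
      (δ ^ 2 + 2 / c * max (-(lam * p - b * δ)) 0 + ε) /
        (2 * max (lam * p - b * δ) 0 + c * ε) * K :=
  maximum_principle_coercive_general n lam Lam p hp1 hpn b c δ hb hc Ω hΩo hΩsub u f hu hsub M K hfK
    hM

end
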